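/- For all i, j ∈ {1,…,4}, the horizontal Ricci d-tensor R_{ij} := Σ_{m=1}^{4} [ ∂H^m_{ij}/∂x^m − ∂H^m_{im}/∂x^j ] + Σ_{m,r=1}^{4} [ H^r_{ij} H^m_{rm} − H^r_{im} H^m_{rj} ] + Σ_{m,r=1}^{4} C_{i(1)}^{m(r)} R_{(r)jm}^{(1)} satisfies: R_{ii} = 0 for every i, and for i ≠ j, R_{ij} = −2σ_{ij}(x) − (p_i/p_k) σ_{jk}(x) − (p_i/p_l) σ_{jl}(x), where {k, l} = {1,2,3,4} \ {i, j}. -/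

import Mathlib

/-- Partial derivative of `f : (Fin 4 → ℝ) → ℝ` with respect to the `i`-th coordinate. -/
noncomputable def pd (f : (Fin 4 → ℝ) → ℝ) (i : Fin 4) (v : Fin 4 → ℝ) : ℝ :=
  deriv (fun s => f (Function.update v i s)) (v i)

/-- Kronecker delta. -/
noncomputable def kron (i j : Fin 4) : ℝ := if i = j then 1 else 0

/-- The Cartan coefficient `H^i_{jk} = 4 δ^i_j δ^i_k σ_i(x)`. -/
noncomputable def Hh (σ : (Fin 4 → ℝ) → ℝ) (x : Fin 4 → ℝ) (i j k : Fin 4) : ℝ :=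
  4 * kron i j * kron i k * pd σ i x

/-- `𝖢_i^{jk} = (1 − 2δ^{jk} − 2δ^j_i − 2δ^k_i + 8δ^j_i δ^k_i)/8`. -/
noncomputable def CC (i j k : Fin 4) : ℝ :=
  (1 - 2 * kron j k - 2 * kron i j - 2 * kron i k + 8 * kron i j * kron i k) / 8

/-- The vertical d-tensor `C_{i(1)}^{j(k)} = 𝖢_i^{jk} p_i/(p_j p_k)`. -/
noncomputable def Cv (p : Fin 4 → ℝ) (i j k : Fin 4) : ℝ :=
  CC i j k * p i / (p j * p k)

/-- The torsion d-tensor `R_{(r)jm}^{(1)} = −4 σ_{jm}(x)(p_j δ_{jr} − p_m δ_{mr})`. -/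
noncomputable def Rt (σ : (Fin 4 → ℝ) → ℝ) (x p : Fin 4 → ℝ) (r j m : Fin 4) : ℝ :=
  -4 * pd (fun x' => pd σ j x') m x * (p j * kron j r - p m * kron m r)

/-- The horizontal Ricci d-tensor
`R_{ij} = Σ_m [∂H^m_{ij}/∂x^m − ∂H^m_{im}/∂x^j]
+ Σ_{m,r} [H^r_{ij} H^m_{rm} − H^r_{im} H^m_{rj}] + Σ_{m,r} C_{i(1)}^{m(r)} R_{(r)jm}^{(1)}`. -/
noncomputable def Ric (σ : (Fin 4 → ℝ) → ℝ) (x p : Fin 4 → ℝ) (i j : Fin 4) : ℝ :=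
  (∑ m, (pd (fun x' => Hh σ x' m i j) m x - pd (fun x' => Hh σ x' m i m) j x))
    + (∑ m, ∑ r, (Hh σ x r i j * Hh σ x m r m - Hh σ x r i m * Hh σ x m r j))
    + ∑ m, ∑ r, Cv p i m r * Rt σ x p r j m


section StmtAux

lemma pd_const_mul' (f : (Fin 4 → ℝ) → ℝ) (c : ℝ) (i : Fin 4) (v : Fin 4 → ℝ) :
    pd (fun x => c * f x) i v = c * pd f i v := by
  simp [pd, deriv_const_mul_field]

lemma pd_hasDerivAt' (f : (Fin 4 → ℝ) → ℝ) (f' : (Fin 4 → ℝ) →L[ℝ] ℝ) (i : Fin 4)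
    (v : Fin 4 → ℝ) (hf : HasFDerivAt f f' v) :
    HasDerivAt (fun s => f (Function.update v i s)) (f' (Pi.single i 1)) (v i) := by
  have h0 : HasDerivAt (Function.update v i) (Pi.single i 1) (v i) := hasDerivAt_update v i (v i)
  have h2 : HasFDerivAt f f' (Function.update v i (v i)) := by rwa [Function.update_eq_self]
  exact h2.comp_hasDerivAt (v i) h0

lemma pd_eq_fderiv' (f : (Fin 4 → ℝ) → ℝ) (i : Fin 4) (v : Fin 4 → ℝ)
    (hf : DifferentiableAt ℝ f v) :
    pd f i v = fderiv ℝ f v (Pi.single i 1) :=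
  (pd_hasDerivAt' f _ i v hf.hasFDerivAt).deriv

lemma pd_comm' (σ : (Fin 4 → ℝ) → ℝ) (hσ : ContDiff ℝ (⊤ : ℕ∞) σ) (i j : Fin 4) (x : Fin 4 → ℝ) :
    pd (fun x' => pd σ i x') j x = pd (fun x' => pd σ j x') i x := by
  have hd : Differentiable ℝ σ := hσ.differentiable (by simp)
  have hfd : Differentiable ℝ (fderiv ℝ σ) := (hσ.fderiv_right (m := 1) (WithTop.coe_le_coe.mpr le_top)).differentiable (by simp)
  have key : ∀ a b : Fin 4, pd (fun x' => pd σ a x') b x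
      = fderiv ℝ (fderiv ℝ σ) x (Pi.single b 1) (Pi.single a 1) := by
    intro a b
    have h1 : (fun x' => pd σ a x') = fun x' => (fderiv ℝ σ x') (Pi.single a 1) := by
      funext x'; exact pd_eq_fderiv' σ a x' (hd x')
    rw [h1, pd]
    have h2 : HasDerivAt (fun s => fderiv ℝ σ (Function.update x b s))
        (fderiv ℝ (fderiv ℝ σ) x (Pi.single b 1)) (x b) := by
      have h0 : HasDerivAt (Function.update x b) (Pi.single b 1) (x b) :=
        hasDerivAt_update x b (x b)
      have h2' : HasFDerivAt (fderiv ℝ σ) (fderiv ℝ (fderiv ℝ σ) x)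
          (Function.update x b (x b)) := by
        rw [Function.update_eq_self]
        exact (hfd x).hasFDerivAt
      exact h2'.comp_hasDerivAt (x b) h0
    have h3 := (ContinuousLinearMap.apply ℝ ℝ
      (Pi.single a 1 : Fin 4 → ℝ)).hasFDerivAt.comp_hasDerivAt (x b) h2
    simpa [Function.comp_def] using h3.deriv
  rw [key i j, key j i]
  exact ((hσ.contDiffAt (x := x)).isSymmSndFDerivAt (by norm_num; exact WithTop.coe_le_coe.mpr le_top)).eq _ _

lemma pd_Hh' (σ : (Fin 4 → ℝ) → ℝ) (m i j r : Fin 4) (x : Fin 4 → ℝ) :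
    pd (fun x' => Hh σ x' m i j) r x
      = 4 * kron m i * kron m j * pd (fun x' => pd σ m x') r x := by
  simp only [Hh]
  exact pd_const_mul' _ _ _ _

lemma kron_diag' (i : Fin 4) : kron i i = 1 := by simp [kron]
lemma kron01' : kron 0 1 = 0 := by simp [kron]
lemma kron02' : kron 0 2 = 0 := by simp [kron]
lemma kron03' : kron 0 3 = 0 := by simp [kron]
lemma kron10' : kron 1 0 = 0 := by simp [kron]
lemma kron12' : kron 1 2 = 0 := by simp [kron]
lemma kron13' : kron 1 3 = 0 := by simp [kron]
lemma kron20' : kron 2 0 = 0 := by simp [kron]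
lemma kron21' : kron 2 1 = 0 := by simp [kron]
lemma kron23' : kron 2 3 = 0 := by simp [kron]
lemma kron30' : kron 3 0 = 0 := by simp [kron]
lemma kron31' : kron 3 1 = 0 := by simp [kron]
lemma kron32' : kron 3 2 = 0 := by simp [kron]

end StmtAux

set_option maxHeartbeats 2000000 in
/-- `R_{ii} = 0`, and for `i ≠ j`,
`R_{ij} = −2σ_{ij} − (p_i/p_k) σ_{jk} − (p_i/p_l) σ_{jl}` where `{k,l} = {1,2,3,4} \ {i,j}`. -/
theorem stmt_11 (σ : (Fin 4 → ℝ) → ℝ) (hσ : ContDiff ℝ (⊤ : ℕ∞) σ)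
    (x p : Fin 4 → ℝ) (hp : ∀ i, 0 < p i) :
    (∀ i, Ric σ x p i i = 0)
    ∧ ∀ i j k l : Fin 4, i ≠ j → k ≠ l → k ≠ i → k ≠ j → l ≠ i → l ≠ j →
        Ric σ x p i j
          = -2 * pd (fun x' => pd σ i x') j x
            - (p i / p k) * pd (fun x' => pd σ j x') k x
            - (p i / p l) * pd (fun x' => pd σ j x') l x := by
  have hfin : ∀ m : Fin 4, m = 0 ∨ m = 1 ∨ m = 2 ∨ m = 3 := by decide
  have h0 := (hp 0).ne'; have h1 := (hp 1).ne'; have h2 := (hp 2).ne'; have h3 := (hp 3).ne'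
  have e10 := pd_comm' σ hσ 1 0 x; have e20 := pd_comm' σ hσ 2 0 x
  have e21 := pd_comm' σ hσ 2 1 x; have e30 := pd_comm' σ hσ 3 0 x
  have e31 := pd_comm' σ hσ 3 1 x; have e32 := pd_comm' σ hσ 3 2 x
  have R01 : Ric σ x p 0 1 = -2 * pd (fun x' => pd σ 0 x') 1 x - (p 0 / p 2) * pd (fun x' => pd σ 1 x') 2 x - (p 0 / p 3) * pd (fun x' => pd σ 1 x') 3 x := (by
      simp only [Ric, Fin.sum_univ_four, pd_Hh']
      simp only [Hh, Cv, Rt, CC, kron_diag', kron01', kron02', kron03', kron10', kron12',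
        kron13', kron20', kron21', kron23', kron30', kron31', kron32',
        e10, e20, e21, e30, e31, e32,
        mul_zero, zero_mul, mul_one, one_mul, add_zero, zero_add, sub_zero, zero_sub,
        neg_zero, sub_self]
      field_simp
      ring)
  have R02 : Ric σ x p 0 2 = -2 * pd (fun x' => pd σ 0 x') 2 x - (p 0 / p 1) * pd (fun x' => pd σ 2 x') 1 x - (p 0 / p 3) * pd (fun x' => pd σ 2 x') 3 x := (by
      simp only [Ric, Fin.sum_univ_four, pd_Hh']
      simp only [Hh, Cv, Rt, CC, kron_diag', kron01', kron02', kron03', kron10', kron12',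
        kron13', kron20', kron21', kron23', kron30', kron31', kron32',
        e10, e20, e21, e30, e31, e32,
        mul_zero, zero_mul, mul_one, one_mul, add_zero, zero_add, sub_zero, zero_sub,
        neg_zero, sub_self]
      field_simp
      ring)
  have R03 : Ric σ x p 0 3 = -2 * pd (fun x' => pd σ 0 x') 3 x - (p 0 / p 1) * pd (fun x' => pd σ 3 x') 1 x - (p 0 / p 2) * pd (fun x' => pd σ 3 x') 2 x := (by
      simp only [Ric, Fin.sum_univ_four, pd_Hh']
      simp only [Hh, Cv, Rt, CC, kron_diag', kron01', kron02', kron03', kron10', kron12',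
        kron13', kron20', kron21', kron23', kron30', kron31', kron32',
        e10, e20, e21, e30, e31, e32,
        mul_zero, zero_mul, mul_one, one_mul, add_zero, zero_add, sub_zero, zero_sub,
        neg_zero, sub_self]
      field_simp
      ring)
  have R10 : Ric σ x p 1 0 = -2 * pd (fun x' => pd σ 1 x') 0 x - (p 1 / p 2) * pd (fun x' => pd σ 0 x') 2 x - (p 1 / p 3) * pd (fun x' => pd σ 0 x') 3 x := (by
      simp only [Ric, Fin.sum_univ_four, pd_Hh']
      simp only [Hh, Cv, Rt, CC, kron_diag', kron01', kron02', kron03', kron10', kron12',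
        kron13', kron20', kron21', kron23', kron30', kron31', kron32',
        e10, e20, e21, e30, e31, e32,
        mul_zero, zero_mul, mul_one, one_mul, add_zero, zero_add, sub_zero, zero_sub,
        neg_zero, sub_self]
      field_simp
      ring)
  have R12 : Ric σ x p 1 2 = -2 * pd (fun x' => pd σ 1 x') 2 x - (p 1 / p 0) * pd (fun x' => pd σ 2 x') 0 x - (p 1 / p 3) * pd (fun x' => pd σ 2 x') 3 x := (by
      simp only [Ric, Fin.sum_univ_four, pd_Hh']
      simp only [Hh, Cv, Rt, CC, kron_diag', kron01', kron02', kron03', kron10', kron12',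
        kron13', kron20', kron21', kron23', kron30', kron31', kron32',
        e10, e20, e21, e30, e31, e32,
        mul_zero, zero_mul, mul_one, one_mul, add_zero, zero_add, sub_zero, zero_sub,
        neg_zero, sub_self]
      field_simp
      ring)
  have R13 : Ric σ x p 1 3 = -2 * pd (fun x' => pd σ 1 x') 3 x - (p 1 / p 0) * pd (fun x' => pd σ 3 x') 0 x - (p 1 / p 2) * pd (fun x' => pd σ 3 x') 2 x := (by
      simp only [Ric, Fin.sum_univ_four, pd_Hh']
      simp only [Hh, Cv, Rt, CC, kron_diag', kron01', kron02', kron03', kron10', kron12',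
        kron13', kron20', kron21', kron23', kron30', kron31', kron32',
        e10, e20, e21, e30, e31, e32,
        mul_zero, zero_mul, mul_one, one_mul, add_zero, zero_add, sub_zero, zero_sub,
        neg_zero, sub_self]
      field_simp
      ring)
  have R20 : Ric σ x p 2 0 = -2 * pd (fun x' => pd σ 2 x') 0 x - (p 2 / p 1) * pd (fun x' => pd σ 0 x') 1 x - (p 2 / p 3) * pd (fun x' => pd σ 0 x') 3 x := (by
      simp only [Ric, Fin.sum_univ_four, pd_Hh']
      simp only [Hh, Cv, Rt, CC, kron_diag', kron01', kron02', kron03', kron10', kron12',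
        kron13', kron20', kron21', kron23', kron30', kron31', kron32',
        e10, e20, e21, e30, e31, e32,
        mul_zero, zero_mul, mul_one, one_mul, add_zero, zero_add, sub_zero, zero_sub,
        neg_zero, sub_self]
      field_simp
      ring)
  have R21 : Ric σ x p 2 1 = -2 * pd (fun x' => pd σ 2 x') 1 x - (p 2 / p 0) * pd (fun x' => pd σ 1 x') 0 x - (p 2 / p 3) * pd (fun x' => pd σ 1 x') 3 x := (by
      simp only [Ric, Fin.sum_univ_four, pd_Hh']
      simp only [Hh, Cv, Rt, CC, kron_diag', kron01', kron02', kron03', kron10', kron12',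
        kron13', kron20', kron21', kron23', kron30', kron31', kron32',
        e10, e20, e21, e30, e31, e32,
        mul_zero, zero_mul, mul_one, one_mul, add_zero, zero_add, sub_zero, zero_sub,
        neg_zero, sub_self]
      field_simp
      ring)
  have R23 : Ric σ x p 2 3 = -2 * pd (fun x' => pd σ 2 x') 3 x - (p 2 / p 0) * pd (fun x' => pd σ 3 x') 0 x - (p 2 / p 1) * pd (fun x' => pd σ 3 x') 1 x := (by
      simp only [Ric, Fin.sum_univ_four, pd_Hh']
      simp only [Hh, Cv, Rt, CC, kron_diag', kron01', kron02', kron03', kron10', kron12',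
        kron13', kron20', kron21', kron23', kron30', kron31', kron32',
        e10, e20, e21, e30, e31, e32,
        mul_zero, zero_mul, mul_one, one_mul, add_zero, zero_add, sub_zero, zero_sub,
        neg_zero, sub_self]
      field_simp
      ring)
  have R30 : Ric σ x p 3 0 = -2 * pd (fun x' => pd σ 3 x') 0 x - (p 3 / p 1) * pd (fun x' => pd σ 0 x') 1 x - (p 3 / p 2) * pd (fun x' => pd σ 0 x') 2 x := (by
      simp only [Ric, Fin.sum_univ_four, pd_Hh']
      simp only [Hh, Cv, Rt, CC, kron_diag', kron01', kron02', kron03', kron10', kron12',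
        kron13', kron20', kron21', kron23', kron30', kron31', kron32',
        e10, e20, e21, e30, e31, e32,
        mul_zero, zero_mul, mul_one, one_mul, add_zero, zero_add, sub_zero, zero_sub,
        neg_zero, sub_self]
      field_simp
      ring)
  have R31 : Ric σ x p 3 1 = -2 * pd (fun x' => pd σ 3 x') 1 x - (p 3 / p 0) * pd (fun x' => pd σ 1 x') 0 x - (p 3 / p 2) * pd (fun x' => pd σ 1 x') 2 x := (by
      simp only [Ric, Fin.sum_univ_four, pd_Hh']
      simp only [Hh, Cv, Rt, CC, kron_diag', kron01', kron02', kron03', kron10', kron12',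
        kron13', kron20', kron21', kron23', kron30', kron31', kron32',
        e10, e20, e21, e30, e31, e32,
        mul_zero, zero_mul, mul_one, one_mul, add_zero, zero_add, sub_zero, zero_sub,
        neg_zero, sub_self]
      field_simp
      ring)
  have R32 : Ric σ x p 3 2 = -2 * pd (fun x' => pd σ 3 x') 2 x - (p 3 / p 0) * pd (fun x' => pd σ 2 x') 0 x - (p 3 / p 1) * pd (fun x' => pd σ 2 x') 1 x := (by
      simp only [Ric, Fin.sum_univ_four, pd_Hh']
      simp only [Hh, Cv, Rt, CC, kron_diag', kron01', kron02', kron03', kron10', kron12',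
        kron13', kron20', kron21', kron23', kron30', kron31', kron32',
        e10, e20, e21, e30, e31, e32,
        mul_zero, zero_mul, mul_one, one_mul, add_zero, zero_add, sub_zero, zero_sub,
        neg_zero, sub_self]
      field_simp
      ring)
  constructor
  · intro i
    rcases hfin i with hi | hi | hi | hi <;> subst hi <;>
    · simp only [Ric, Fin.sum_univ_four, pd_Hh']
      simp only [Hh, Cv, Rt, CC, kron_diag', kron01', kron02', kron03', kron10', kron12',
        kron13', kron20', kron21', kron23', kron30', kron31', kron32',
        e10, e20, e21, e30, e31, e32,
        mul_zero, zero_mul, mul_one, one_mul, add_zero, zero_add, sub_zero, zero_sub,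
        neg_zero, sub_self]
      field_simp
      ring
  · intro i j k l hij hkl hki hkj hli hlj
    rcases hfin i with hi | hi | hi | hi <;> subst hi <;>
    rcases hfin j with hj | hj | hj | hj <;> subst hj <;>
      first
      | exact absurd rfl hij
      | (rcases hfin k with hk | hk | hk | hk <;> subst hk <;>
         rcases hfin l with hl | hl | hl | hl <;> subst hl <;>
          first
          | exact absurd rfl hkl
          | exact absurd rfl hki
          | exact absurd rfl hkj
          | exact absurd rfl hli
          | exact absurd rfl hlj
          | (rw [R01]; try ring) | (rw [R02]; try ring) | (rw [R03]; try ring)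
          | (rw [R10]; try ring) | (rw [R12]; try ring) | (rw [R13]; try ring)
          | (rw [R20]; try ring) | (rw [R21]; try ring) | (rw [R23]; try ring)
          | (rw [R30]; try ring) | (rw [R31]; try ring) | (rw [R32]; try ring))
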